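/- arXiv:2605.09714 — 3 statements merged into one kernel-verified Lean document; each statement's English description precedes it below -/
import Mathlib

section
/- If 𝔲 and 𝔳 are ultrafilters on ω with 𝔲 ≤_RK 𝔳 and 𝔳 ≤_RK 𝔲 witnessed by f and g respectively (i.e., f(𝔳) = 𝔲 and g(𝔲) = 𝔳), then the set {n ∈ ω : f(g(n)) = n} belongs to 𝔲. -/
open Function

namespace RKFix

variable (h : ℕ → ℕ)

def Eqv (m n : ℕ) : Prop := ∃ i j, h^[i] m = h^[j] n

lemma eqv_refl (n : ℕ) : Eqv h n n := ⟨0, 0, rfl⟩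

lemma eqv_symm {m n : ℕ} : Eqv h m n → Eqv h n m := fun ⟨i, j, e⟩ => ⟨j, i, e.symm⟩

lemma eqv_trans {m n p : ℕ} : Eqv h m n → Eqv h n p → Eqv h m p := by
  rintro ⟨i, j, e1⟩ ⟨i', j', e2⟩
  refine ⟨i' + i, j + j', ?_⟩
  calc h^[i' + i] m = h^[i'] (h^[i] m) := iterate_add_apply ..
    _ = h^[i'] (h^[j] n) := by rw [e1]
    _ = h^[j] (h^[i'] n) := by rw [← iterate_add_apply, ← iterate_add_apply, Nat.add_comm]
    _ = h^[j] (h^[j'] p) := by rw [e2]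
    _ = h^[j + j'] p := (iterate_add_apply ..).symm

def st : Setoid ℕ := ⟨Eqv h, ⟨eqv_refl h, eqv_symm h, eqv_trans h⟩⟩

noncomputable def rep (n : ℕ) : ℕ := (Quotient.mk (st h) n).out

lemma rep_eqv (n : ℕ) : Eqv h (rep h n) n :=
  @Quotient.exact ℕ (st h) _ _ (Quotient.out_eq _)

lemma rep_h (n : ℕ) : rep h (h n) = rep h n := by
  unfold rep
  congr 1
  exact Quotient.sound ⟨0, 1, rfl⟩

lemma ex (n : ℕ) : ∃ p : ℕ × ℕ, h^[p.1] (rep h n) = h^[p.2] n := by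
  obtain ⟨i, j, e⟩ := rep_eqv h n; exact ⟨(i, j), e⟩

noncomputable def wit (n : ℕ) : ℕ × ℕ := Classical.choose (ex h n)

lemma wit_spec (n : ℕ) : h^[(wit h n).1] (rep h n) = h^[(wit h n).2] n :=
  Classical.choose_spec (ex h n)

noncomputable def φ (n : ℕ) : ℤ := ((wit h n).1 : ℤ) - (wit h n).2

/-- Parity contradiction: if `ρ` increases by exactly 1 along `h` on a large set. -/
lemma parity (𝔲 : Ultrafilter ℕ) (H : ∀ X : Set ℕ, X ∈ 𝔲 → h ⁻¹' X ∈ 𝔲)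
    (U : Set ℕ) (hU : U ∈ 𝔲) (ρ : ℕ → ℤ)
    (hρ : ∀ n ∈ U, h n ∈ U → ρ (h n) = ρ n + 1) : False := by
  have hsplit : U ⊆ {n | n ∈ U ∧ ρ n % 2 = 0} ∪ {n | n ∈ U ∧ ρ n % 2 = 1} := by
    intro n hn
    rcases Int.emod_two_eq (ρ n) with e | e
    · exact Or.inl ⟨hn, e⟩
    · exact Or.inr ⟨hn, e⟩
  have hmem : ({n | n ∈ U ∧ ρ n % 2 = 0} ∪ {n | n ∈ U ∧ ρ n % 2 = 1}) ∈ 𝔲 :=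
    Filter.mem_of_superset hU hsplit
  rcases (Ultrafilter.union_mem_iff.mp hmem) with hP | hP <;>
  · obtain ⟨n, hn1, hn2⟩ := Ultrafilter.nonempty_of_mem (Filter.inter_mem hP (H _ hP))
    have e := hρ n hn1.1 hn2.1
    have := hn1.2; have := hn2.2
    omega

/-- Escape-rank contradiction: a large set every point of which eventually leaves it. -/
lemma escape (𝔲 : Ultrafilter ℕ) (H : ∀ X : Set ℕ, X ∈ 𝔲 → h ⁻¹' X ∈ 𝔲)
    (T : Set ℕ) (hT : T ∈ 𝔲) (he : ∀ n ∈ T, ∃ k, h^[k] n ∉ T) : False := by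
  classical
  let r : ℕ → ℕ := fun n => if hn : n ∈ T then Nat.find (he n hn) else 0
  have key : ∀ n ∈ T, h n ∈ T → r n = r (h n) + 1 := by
    intro n hn hhn
    have h1 : r n = Nat.find (he n hn) := dif_pos hn
    have h2 : r (h n) = Nat.find (he (h n) hhn) := dif_pos hhn
    set a := Nat.find (he n hn) with ha
    set b := Nat.find (he (h n) hhn) with hb
    have hspa : h^[a] n ∉ T := Nat.find_spec (he n hn)
    have hspb : h^[b] (h n) ∉ T := Nat.find_spec (he (h n) hhn)
    have ha1 : a ≠ 0 := by
      intro h0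
      rw [h0] at hspa
      exact hspa hn
    have le1 : a ≤ b + 1 := by
      apply Nat.find_min' (he n hn)
      rw [iterate_succ_apply]
      exact hspb
    have le2 : b ≤ a - 1 := by
      apply Nat.find_min' (he (h n) hhn)
      rw [← iterate_succ_apply, Nat.succ_eq_add_one, Nat.sub_add_cancel (Nat.one_le_iff_ne_zero.mpr ha1)]
      exact hspa
    omega
  exact parity h 𝔲 H T hT (fun n => -(r n : ℤ)) (by
    intro n hn hhn
    have := key n hn hhn
    show -(r (h n) : ℤ) = -(r n : ℤ) + 1
    omega)

lemma iter_inj (x i₀ : ℕ) (hx : ∀ k, i₀ ≤ k → h^[k] x < h^[k + 1] x)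
    {a b : ℕ} (hab : h^[a] x = h^[b] x) : a = b := by
  have hg : StrictMono (fun t => h^[i₀ + t] x) := by
    apply strictMono_nat_of_lt_succ
    intro t
    exact hx (i₀ + t) (Nat.le_add_right _ _)
  have h2 : (fun t => h^[i₀ + t] x) a = (fun t => h^[i₀ + t] x) b := by
    simp only [iterate_add_apply, hab]
  exact hg.injective h2

lemma phi_succ {n : ℕ} (hn : ∀ k, h^[k] n < h^[k + 1] n) : φ h (h n) = φ h n + 1 := by
  set p := wit h n with hp
  set q := wit h (h n) with hq
  have e1 : h^[p.1] (rep h n) = h^[p.2] n := wit_spec h n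
  have e2 : h^[q.1] (rep h n) = h^[q.2 + 1] n := by
    have h1 := wit_spec h (h n)
    rw [rep_h] at h1
    rw [h1, ← iterate_succ_apply]
  obtain ⟨a, b, eab⟩ := rep_eqv h n
  have htail : ∀ k, a ≤ k → h^[k] (rep h n) < h^[k + 1] (rep h n) := by
    intro k hk
    obtain ⟨t, rfl⟩ := Nat.exists_eq_add_of_le hk
    have hbt : h^[a + t] (rep h n) = h^[b + t] n := by
      rw [Nat.add_comm a t, iterate_add_apply, eab, ← iterate_add_apply, Nat.add_comm t b]
    have hbt1 : h^[a + t + 1] (rep h n) = h^[b + t + 1] n := by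
      rw [iterate_succ_apply', hbt]
      exact (iterate_succ_apply' h (b + t) n).symm
    rw [hbt, hbt1]
    exact hn (b + t)
  have k1 : h^[q.2 + 1 + p.1] (rep h n) = h^[q.2 + 1 + p.2] n := by
    rw [iterate_add_apply, e1, ← iterate_add_apply]
  have k2 : h^[p.2 + q.1] (rep h n) = h^[q.2 + 1 + p.2] n := by
    rw [iterate_add_apply, e2, ← iterate_add_apply, Nat.add_comm]
  have keq : h^[q.2 + 1 + p.1] (rep h n) = h^[p.2 + q.1] (rep h n) := by
    rw [k1, k2]
  have hfin := iter_inj h (rep h n) a htail keq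
  unfold φ
  rw [← hp, ← hq]
  omega

end RKFix

/-- If `f` pushes `𝔳` to `𝔲` and `g` pushes `𝔲` to `𝔳`, then
`{n : f (g n) = n} ∈ 𝔲`. -/
theorem rk_equiv_fixed_set (𝔲 𝔳 : Ultrafilter ℕ) (f g : ℕ → ℕ)
    (hf : Ultrafilter.map f 𝔳 = 𝔲) (hg : Ultrafilter.map g 𝔲 = 𝔳) :
    {n : ℕ | f (g n) = n} ∈ 𝔲 := by
  classical
  set h : ℕ → ℕ := fun n => f (g n) with hh
  have hmap : ∀ X : Set ℕ, X ∈ 𝔲 → h ⁻¹' X ∈ 𝔲 := by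
    intro X hX
    have h1 : X ∈ Ultrafilter.map f 𝔳 := hf.symm ▸ hX
    have h2 : f ⁻¹' X ∈ 𝔳 := Ultrafilter.mem_map.mp h1
    have h3 : f ⁻¹' X ∈ Ultrafilter.map g 𝔲 := hg.symm ▸ h2
    exact Ultrafilter.mem_map.mp h3
  by_contra hF
  have hS : {n | h n ≠ n} ∈ 𝔲 := by
    exact (Ultrafilter.compl_mem_iff_notMem (s := {n : ℕ | h n = n})).mpr hF
  have hsub : {n | h n ≠ n} ⊆ {n | h n < n} ∪ {n | n < h n} := by
    intro n hn
    rcases lt_or_gt_of_ne hn with hlt | hgt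
    · exact Or.inl hlt
    · exact Or.inr hgt
  have hun : ({n | h n < n} ∪ {n | n < h n}) ∈ 𝔲 := Filter.mem_of_superset hS hsub
  rcases Ultrafilter.union_mem_iff.mp hun with hA | hA
  · refine RKFix.escape h 𝔲 hmap _ hA ?_
    intro n hn
    by_contra hc
    push_neg at hc
    have bound : ∀ k, h^[k] n + k ≤ n := by
      intro k
      induction k with
      | zero => simp
      | succ k ih =>
        have h1 : h (h^[k] n) < h^[k] n := hc k
        have e : h^[k + 1] n = h (h^[k] n) := Function.iterate_succ_apply' ..
        omega
    have := bound (n + 1)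
    omega
  · have hsub2 : {n | n < h n} ⊆
        ({n | n < h n} \ {n | ∀ k, h^[k] n < h^[k + 1] n}) ∪ {n | ∀ k, h^[k] n < h^[k + 1] n} := by
      intro n hn
      by_cases hc : n ∈ {n | ∀ k, h^[k] n < h^[k + 1] n}
      · exact Or.inr hc
      · exact Or.inl ⟨hn, hc⟩
    rcases Ultrafilter.union_mem_iff.mp (Filter.mem_of_superset hA hsub2) with hB | hCm
    · refine RKFix.escape h 𝔲 hmap _ hB ?_
      intro n hn
      obtain ⟨hn1, hn2⟩ := hn
      simp only [Set.mem_setOf_eq, not_forall, not_lt] at hn2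
      obtain ⟨k, hk⟩ := hn2
      refine ⟨k, fun hmem => ?_⟩
      have h1 : h^[k] n < h (h^[k] n) := hmem.1
      rw [← Function.iterate_succ_apply' h k n] at h1
      simp only [Nat.succ_eq_add_one] at h1
      omega
    · refine RKFix.parity h 𝔲 hmap _ hCm (RKFix.φ h) ?_
      intro n hn _
      exact RKFix.phi_succ h hn
end

section
/- If 𝔲 is an ultrafilter on ω and f : ω → ω satisfies f(𝔲) = 𝔲 (the pushforward equals 𝔲), then {n : f(n) = n} ∈ 𝔲. -/
/-!
If `f n ≠ n` for `𝔲`-many `n`, colour `ℕ` with finitely many colours so that `n` and `f n`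
always get different colours when `f n ≠ n`. One colour class `A` lies in `𝔲`, and so does
`f ⁻¹' A` because `f` fixes `𝔲`; a point of `A ∩ f ⁻¹' A` moved by `f` is a contradiction.

Such a colouring combines the parities of three depth functions: depth along `f` among the
points with `f n < n`, the index of the block containing `n`, and depth along `f` inside a block,
where the blocks are finite intervals chosen so that `f` maps each one below the end of the next.
-/

open Filter

theorem Ultrafilter.eventually_comp_eq_of_map_eq {α β : Type*} [Finite β] {𝔲 : Ultrafilter α}
    {f : α → α} (hf : 𝔲.map f = 𝔲) (c : α → β) : ∀ᶠ a in 𝔲, c (f a) = c a := by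
  obtain ⟨b, hb⟩ := (𝔲.map c).eq_pure_of_finite
  have hc : Tendsto c 𝔲 (pure b) := by rw [Tendsto, ← Ultrafilter.coe_map, hb]; rfl
  have hfu : Tendsto f 𝔲 𝔲 := by rw [Tendsto, ← Ultrafilter.coe_map, hf]
  filter_upwards [tendsto_pure.mp hc, tendsto_pure.mp (hc.comp hfu)] with a ha hfa
  exact hfa.trans ha.symm

theorem WellFounded.exists_bool_coloring {α : Type*} {r : α → α → Prop} (hr : WellFounded r)
    (f : α → α) : ∃ c : α → Bool, ∀ a, r (f a) a → c (f a) ≠ c a := by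
  classical
  let depth : α → ℕ := hr.fix fun a IH => if h : r (f a) a then IH (f a) h + 1 else 0
  have depth_eq : ∀ a, r (f a) a → depth a = depth (f a) + 1 := fun a h => by
    simp only [depth]
    rw [hr.fix_eq, dif_pos h]
  refine ⟨fun a => (depth a).bodd, fun a h => ?_⟩
  simp only [depth_eq a h, Nat.bodd_succ]
  exact (Bool.not_ne_self _).symm

namespace Nat

/-- `f` maps `[0, blockBound f k)` into `[0, blockBound f (k + 1))`. -/
def blockBound (f : ℕ → ℕ) : ℕ → ℕ
  | 0 => 0
  | k + 1 => max (k + 1) ((Finset.range (blockBound f k)).sup fun m => f m + 1)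

variable (f : ℕ → ℕ)

theorem apply_lt_blockBound_succ {m k : ℕ} (h : m < blockBound f k) :
    f m < blockBound f (k + 1) := by
  have : f m + 1 ≤ (Finset.range (blockBound f k)).sup fun m => f m + 1 :=
    Finset.le_sup (f := fun m => f m + 1) (Finset.mem_range.mpr h)
  simp only [blockBound]
  omega

theorem lt_blockBound_succ_self (n : ℕ) : n < blockBound f (n + 1) := by
  simp only [blockBound]
  omega

def blockIndex (n : ℕ) : ℕ :=
  Nat.find (⟨n, lt_blockBound_succ_self f n⟩ : ∃ k, n < blockBound f (k + 1))

theorem lt_blockBound_blockIndex_succ (n : ℕ) : n < blockBound f (blockIndex f n + 1) :=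
  Nat.find_spec (⟨n, lt_blockBound_succ_self f n⟩ : ∃ k, n < blockBound f (k + 1))

theorem blockIndex_mono : Monotone (blockIndex f) := fun _ _ hmn =>
  Nat.find_mono fun _ h => lt_of_le_of_lt hmn h

theorem blockIndex_apply_le (n : ℕ) : blockIndex f (f n) ≤ blockIndex f n + 1 :=
  Nat.find_min' _ (apply_lt_blockBound_succ f (lt_blockBound_blockIndex_succ f n))

def AscendsInBlock (m n : ℕ) : Prop :=
  blockIndex f m = blockIndex f n ∧ n < m

theorem wellFounded_ascendsInBlock : WellFounded (AscendsInBlock f) :=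
  Subrelation.wf (r := InvImage (· < ·) fun n => blockBound f (blockIndex f n + 1) - n)
    (fun {m n} ⟨hidx, hnm⟩ => by
      have := lt_blockBound_blockIndex_succ f m
      simp only [InvImage, ← hidx]
      omega)
    (InvImage.wf _ wellFounded_lt)

theorem exists_coloring_apply_ne :
    ∃ c : ℕ → Bool × Bool × Bool, ∀ n, f n ≠ n → c (f n) ≠ c n := by
  obtain ⟨cDown, hDown⟩ := wellFounded_lt.exists_bool_coloring f
  obtain ⟨cUp, hUp⟩ := (wellFounded_ascendsInBlock f).exists_bool_coloring f
  refine ⟨fun n => (cDown n, (blockIndex f n).bodd, cUp n), fun n hne => ?_⟩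
  simp only [ne_eq, Prod.mk.injEq, not_and]
  rcases hne.lt_or_gt with hlt | hgt
  · exact fun h => absurd h (hDown n hlt)
  · intro _ hidx
    have hle := blockIndex_mono f hgt.le
    have hsucc := blockIndex_apply_le f n
    rcases (show blockIndex f (f n) = blockIndex f n ∨ blockIndex f (f n) = blockIndex f n + 1
      by omega) with heq | heq
    · exact hUp n ⟨heq, hgt⟩
    · simp [heq] at hidx

end Nat

/-- (Rudin/Katětov fixed-point lemma) If `f : ω → ω` pushes an ultrafilter
`𝔲` forward to itself, then `{n : f n = n} ∈ 𝔲`. -/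
theorem rk_fixed_point (𝔲 : Ultrafilter ℕ) (f : ℕ → ℕ)
    (hf : Ultrafilter.map f 𝔲 = 𝔲) :
    {n : ℕ | f n = n} ∈ 𝔲 := by
  obtain ⟨c, hc⟩ := Nat.exists_coloring_apply_ne f
  filter_upwards [Ultrafilter.eventually_comp_eq_of_map_eq hf c] with n hn
  by_contra hne
  exact hc n hne hn
end

section
/- A nonprincipal ultrafilter 𝔲 on ω is Ramsey (selective) if and only if it is Rudin–Keisler minimal: 𝔲 is Ramsey iff for every f : ω → ω either f is constant on a set in 𝔲 or f is injective on a set in 𝔲; and this holds iff every nonprincipal ultrafilter 𝔳 with 𝔳 ≤_RK 𝔲 satisfies 𝔳 ≈_RK 𝔲. -/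
/-- `𝔲 ≤_RK 𝔳` iff some `f : ω → ω` pushes `𝔳` forward to `𝔲`. -/
def RKle (𝔲 𝔳 : Ultrafilter ℕ) : Prop :=
  ∃ f : ℕ → ℕ, Ultrafilter.map f 𝔳 = 𝔲

/-- Rudin–Keisler equivalence. -/
def RKequiv (𝔲 𝔳 : Ultrafilter ℕ) : Prop :=
  RKle 𝔲 𝔳 ∧ RKle 𝔳 𝔲

/-- `𝔲` is Ramsey: every 2-coloring of pairs from `ω` has a homogeneous set in `𝔲`. -/
def IsRamsey (𝔲 : Ultrafilter ℕ) : Prop :=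
  ∀ c : ℕ → ℕ → Bool, ∃ H ∈ 𝔲, ∃ b : Bool,
    ∀ m ∈ H, ∀ n ∈ H, m < n → c m n = b

/-- `𝔲` is selective: every `f : ω → ω` is constant or injective on some set in `𝔲`. -/
def IsSelective (𝔲 : Ultrafilter ℕ) : Prop :=
  ∀ f : ℕ → ℕ, (∃ U ∈ 𝔲, ∃ k, ∀ n ∈ U, f n = k) ∨ (∃ U ∈ 𝔲, Set.InjOn f U)


section Aux
open Set
open scoped Classical

lemma map_congr' (u : Ultrafilter ℕ) (f g : ℕ → ℕ) (h : {n | f n = g n} ∈ u) :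
    Ultrafilter.map f u = Ultrafilter.map g u := by
  apply Ultrafilter.coe_injective
  simp only [Ultrafilter.coe_map]
  exact Filter.map_congr h

lemma preim_mem {u : Ultrafilter ℕ} {h : ℕ → ℕ} (e : Ultrafilter.map h u = u)
    {s : Set ℕ} (hs : s ∈ u) : h ⁻¹' s ∈ u := by
  rw [← e] at hs; exact Ultrafilter.mem_map.mp hs

lemma exists_parity (u : Ultrafilter ℕ) (g : ℕ → ℕ) : ∃ b, {n | g n % 2 = b} ∈ u := by
  rcases Ultrafilter.mem_or_compl_mem u {n | g n % 2 = 0} with h | h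
  · exact ⟨0, h⟩
  · refine ⟨1, ?_⟩
    have : {n | g n % 2 = 0}ᶜ = {n | g n % 2 = 1} := by
      ext n; simp only [Set.mem_compl_iff, Set.mem_setOf_eq]; omega
    rwa [this] at h

lemma find_shift {P Q : ℕ → Prop} [DecidablePred P] [DecidablePred Q]
    (hP : ∃ i, P i) (h0 : ¬ P 0) (hQ : ∃ i, Q i) (hPQ : ∀ i, Q i ↔ P (i + 1)) :
    Nat.find hQ = Nat.find hP - 1 := by
  have h1 : 1 ≤ Nat.find hP := Nat.pos_of_ne_zero fun hz => h0 (hz ▸ Nat.find_spec hP)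
  rw [Nat.find_eq_iff]
  constructor
  · have hs := Nat.find_spec hP
    have he : Nat.find hP - 1 + 1 = Nat.find hP := by omega
    rw [hPQ, he]; exact hs
  · intro j hj
    rw [hPQ]
    exact Nat.find_min hP (by omega)

/-- interval index machinery -/
noncomputable def idx (a : ℕ → ℕ) (n : ℕ) : ℕ := Nat.findGreatest (fun k => a k ≤ n) n

lemma idx_le {a : ℕ → ℕ} (h0 : a 0 = 0) (n : ℕ) : a (idx a n) ≤ n :=
  Nat.findGreatest_spec (P := fun k => a k ≤ n) (Nat.zero_le n) (by omega)

lemma lt_idx_succ {a : ℕ → ℕ} (ha : StrictMono a) (n : ℕ) : n < a (idx a n + 1) := by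
  by_contra hc
  push_neg at hc
  have hb : idx a n + 1 ≤ n := le_trans (ha.le_apply) hc
  exact Nat.findGreatest_is_greatest (Nat.lt_succ_self _) hb hc

lemma idx_mono {a : ℕ → ℕ} (ha : StrictMono a) (h0 : a 0 = 0) {m n : ℕ} (hmn : m ≤ n) :
    idx a m ≤ idx a n := by
  by_contra hc
  push_neg at hc
  have h1 : a (idx a n + 1) ≤ a (idx a m) := ha.monotone hc
  have h2 := idx_le h0 m
  have h3 := lt_idx_succ ha n
  omega

lemma idx_lt_of_lt {a : ℕ → ℕ} (ha : StrictMono a) (h0 : a 0 = 0) {n k : ℕ} (h : n < a k) :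
    idx a n < k := by
  by_contra hc
  push_neg at hc
  have h1 : a k ≤ a (idx a n) := ha.monotone hc
  have h2 := idx_le h0 n
  omega

lemma iter_ge {h : ℕ → ℕ} (hh : ∀ n, n < h n) (n : ℕ) : ∀ i, n + i ≤ h^[i] n := by
  intro i
  induction i with
  | zero => simp
  | succ i ih =>
    rw [Function.iterate_succ_apply']
    have := hh (h^[i] n)
    omega

lemma fixpoint {u : Ultrafilter ℕ} {h : ℕ → ℕ} (e : Ultrafilter.map h u = u) :
    {n | h n = n} ∈ u := by
  by_contra hc
  have hF : {n | h n = n}ᶜ ∈ u := (Ultrafilter.compl_mem_iff_notMem).mpr hc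
  rcases Ultrafilter.mem_or_compl_mem u {n | h n < n} with hA | hB'
  · -- decreasing case
    set A : Set ℕ := {n | h n < n} with hAdef
    have hex : ∀ n, ∃ i, h^[i] n ∉ A := by
      intro n
      by_contra hcc
      push_neg at hcc
      have key : ∀ i, h^[i] n + i ≤ n := by
        intro i
        induction i with
        | zero => simp
        | succ i ih =>
          have h2 : h^[i+1] n = h (h^[i] n) := Function.iterate_succ_apply' h i n
          have h3 : h (h^[i] n) < h^[i] n := hcc i
          omega
      have := key (n + 1); omega
    set k : ℕ → ℕ := fun n => Nat.find (hex n) with hkdef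
    obtain ⟨b, hb⟩ := exists_parity u k
    have hT : A ∩ ({n | k n % 2 = b} ∩ h ⁻¹' {n | k n % 2 = b}) ∈ u :=
      Filter.inter_mem hA (Filter.inter_mem hb (preim_mem e hb))
    obtain ⟨n, hnA, hnS, hnhS⟩ := Ultrafilter.nonempty_of_mem hT
    have h0 : ¬ (h^[0] n ∉ A) := by simpa using hnA
    have hkh : k (h n) = k n - 1 := by
      apply find_shift (hex n) h0 (hex (h n))
      intro i
      rw [Function.iterate_succ_apply]
    have h1 : 1 ≤ k n := by
      rcases Nat.eq_zero_or_pos (k n) with hz | hp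
      · exact absurd ((Nat.find_eq_zero (hex n)).mp hz) h0
      · exact hp
    have e1 : k n % 2 = b := hnS
    have e2 : k (h n) % 2 = b := hnhS
    omega
  · -- increasing case
    have hB : {n | n < h n} ∈ u := by
      have : {n | h n = n}ᶜ ∩ {n | h n < n}ᶜ ⊆ {n | n < h n} := by
        intro n ⟨h1, h2⟩
        simp only [Set.mem_compl_iff, Set.mem_setOf_eq] at h1 h2 ⊢
        omega
      exact Filter.mem_of_superset (Filter.inter_mem hF hB') this
    set g : ℕ → ℕ := fun n => if n < h n then h n else n + 1 with hgdef
    have hg : ∀ n, n < g n := by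
      intro n; simp only [hgdef]; split <;> omega
    have hge : Ultrafilter.map g u = u := by
      have hcongr : Ultrafilter.map g u = Ultrafilter.map h u := by
        refine map_congr' u g h ?_
        apply Filter.mem_of_superset hB
        intro n hn
        simp only [Set.mem_setOf_eq] at hn ⊢
        show (if n < h n then h n else n + 1) = h n
        rw [if_pos hn]
      rw [hcongr, e]
    -- intervals
    set a : ℕ → ℕ := fun k => Nat.rec 0 (fun _ ak => (Finset.Iic ak).sup g + 1) k with hadef
    have ha0 : a 0 = 0 := rfl
    have haS : ∀ k, a (k + 1) = (Finset.Iic (a k)).sup g + 1 := fun k => rfl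
    have hbound : ∀ k n, n ≤ a k → g n < a (k + 1) := by
      intro k n hn
      rw [haS]
      have : g n ≤ (Finset.Iic (a k)).sup g := Finset.le_sup (Finset.mem_Iic.mpr hn)
      omega
    have hamono : StrictMono a := by
      apply strictMono_nat_of_lt_succ
      intro k
      have := hbound k (a k) le_rfl
      have := hg (a k)
      omega
    -- idx(g n) is idx n or idx n + 1
    have hidx : ∀ n, idx a n ≤ idx a (g n) ∧ idx a (g n) < idx a n + 2 := by
      intro n
      constructor
      · exact idx_mono hamono ha0 (le_of_lt (hg n))
      · apply idx_lt_of_lt hamono ha0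
        exact hbound (idx a n + 1) n (le_of_lt (lt_idx_succ hamono n))
    obtain ⟨b, hb⟩ := exists_parity u (idx a)
    have hTmem : {n | idx a n % 2 = b} ∩ g ⁻¹' {n | idx a n % 2 = b} ∈ u :=
      Filter.inter_mem hb (preim_mem hge hb)
    -- on T, idx (g n) = idx n
    have hTsame : ∀ n ∈ ({n | idx a n % 2 = b} ∩ g ⁻¹' {n | idx a n % 2 = b}),
        idx a (g n) = idx a n := by
      intro n ⟨h1, h2⟩
      have := hidx n
      simp only [Set.mem_setOf_eq, Set.mem_preimage] at h1 h2
      omega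
    -- inner rank
    have hex2 : ∀ n, ∃ i, a (idx a n + 1) ≤ g^[i] n := by
      intro n
      refine ⟨a (idx a n + 1), ?_⟩
      have := iter_ge hg n (a (idx a n + 1))
      omega
    set s : ℕ → ℕ := fun n => Nat.find (hex2 n) with hsdef
    obtain ⟨b', hb'⟩ := exists_parity u s
    have hT2 : ({n | idx a n % 2 = b} ∩ g ⁻¹' {n | idx a n % 2 = b}) ∩
        ({n | s n % 2 = b'} ∩ g ⁻¹' {n | s n % 2 = b'}) ∈ u :=
      Filter.inter_mem hTmem (Filter.inter_mem hb' (preim_mem hge hb'))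
    obtain ⟨n, hnT, hnS, hnGS⟩ := Ultrafilter.nonempty_of_mem hT2
    have hsame : idx a (g n) = idx a n := hTsame n hnT
    have h0 : ¬ (a (idx a n + 1) ≤ g^[0] n) := by
      simp only [Function.iterate_zero, id_eq]
      exact not_le.mpr (lt_idx_succ hamono n)
    have hsh : s (g n) = s n - 1 := by
      apply find_shift (hex2 n) h0 (hex2 (g n))
      intro i
      rw [hsame, Function.iterate_succ_apply]
    have h1 : 1 ≤ s n := by
      rcases Nat.eq_zero_or_pos (s n) with hz | hp
      · exact absurd ((Nat.find_eq_zero (hex2 n)).mp hz) h0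
      · exact hp
    have e1 : s n % 2 = b' := hnS
    have e2 : s (g n) % 2 = b' := hnGS
    omega

lemma cofin_mem {u : Ultrafilter ℕ} (hnp : ∀ n : ℕ, u ≠ pure n) {s : Set ℕ}
    (hs : s.Finite) : sᶜ ∈ u := by
  by_contra h
  rcases Ultrafilter.eq_pure_of_finite_mem hs ((Ultrafilter.compl_notMem_iff).mp h) with ⟨a, _, ha⟩
  exact hnp a ha

lemma finite_notMem {u : Ultrafilter ℕ} (hnp : ∀ n : ℕ, u ≠ pure n) {s : Set ℕ}
    (hs : s.Finite) : s ∉ u := fun h =>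
  (Ultrafilter.compl_notMem_iff.mpr h) (cofin_mem hnp hs)

lemma umap_map (u : Ultrafilter ℕ) (f g : ℕ → ℕ) :
    Ultrafilter.map g (Ultrafilter.map f u) = Ultrafilter.map (g ∘ f) u := by
  apply Ultrafilter.coe_injective
  simp only [Ultrafilter.coe_map, Filter.map_map]

lemma umap_id (u : Ultrafilter ℕ) : Ultrafilter.map id u = u := by
  apply Ultrafilter.coe_injective
  simp only [Ultrafilter.coe_map, Filter.map_id]

-- NEW: diagonalization
lemma diagonal {u : Ultrafilter ℕ} (hnp : ∀ n : ℕ, u ≠ pure n) (hsel : IsSelective u)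
    (B : ℕ → Set ℕ) (hB : ∀ n, B n ∈ u) :
    ∃ H ∈ u, ∀ m ∈ H, ∀ n ∈ H, m < n → n ∈ B m := by
  set B' : ℕ → Set ℕ := fun n => (⋂ k ∈ Finset.Iic n, B k) ∩ {m | n < m} with hB'def
  have hB'mem : ∀ n, B' n ∈ u := by
    intro n
    apply Filter.inter_mem
    · exact (Filter.biInter_finset_mem _).mpr fun k _ => hB k
    · have : (Set.Iic n)ᶜ = {m | n < m} := by ext m; simp [Set.mem_Iic, not_le]
      rw [← this]
      exact cofin_mem hnp (Set.finite_Iic n)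
  have hB'sub : ∀ m, B' m ⊆ B m := by
    intro m x hx
    have := hx.1
    simp only [Set.mem_iInter] at this
    exact this m (Finset.mem_Iic.mpr le_rfl)
  have hself : ∀ n, n ∉ B' n := by
    intro n hn
    exact lt_irrefl n hn.2
  have hexf : ∀ n, ∃ k, n ∉ B' k := fun n => ⟨n, hself n⟩
  set f : ℕ → ℕ := fun n => Nat.find (hexf n) with hfdef
  have hkey : ∀ m n, m < f n → n ∈ B' m := by
    intro m n hm
    by_contra hc
    exact absurd (Nat.find_le hc) (not_le.mpr hm)
  -- f not constant on any set in u
  rcases hsel f with ⟨U, hU, k, hconst⟩ | ⟨U, hU, hinj⟩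
  · exfalso
    obtain ⟨n, hnU, hnB⟩ := Ultrafilter.nonempty_of_mem (Filter.inter_mem hU (hB'mem k))
    have h2 : n ∉ B' (f n) := Nat.find_spec (hexf n)
    rw [hconst n hnU] at h2
    exact h2 hnB
  -- bounds
  · have hSfin : ∀ m, (U ∩ f ⁻¹' (Set.Iic m)).Finite := by
      intro m
      apply Set.Finite.of_finite_image (f := f)
      · apply Set.Finite.subset (Set.finite_Iic m)
        rintro x ⟨y, hy, rfl⟩
        exact hy.2
      · exact hinj.mono Set.inter_subset_left
    have hbdd : ∀ m, ∃ b, ∀ x ∈ U ∩ f ⁻¹' (Set.Iic m), x ≤ b := by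
      intro m
      rcases (hSfin m).bddAbove with ⟨b, hb⟩
      exact ⟨b, fun x hx => hb hx⟩
    choose hfun hhfun using hbdd
    have hfkey : ∀ m n, n ∈ U → hfun m < n → m < f n := by
      intro m n hnU hlt
      by_contra hc
      push_neg at hc
      exact absurd (hhfun m n ⟨hnU, hc⟩) (not_le.mpr hlt)
    set Hm : ℕ → ℕ := fun x => (Finset.Iic x).sup hfun with hHmdef
    have hHmle : ∀ m x, m ≤ x → hfun m ≤ Hm x := fun m x hmx =>
      Finset.le_sup (Finset.mem_Iic.mpr hmx)
    set a : ℕ → ℕ := fun k => Nat.rec 0 (fun _ ak => max ak (Hm ak) + 1) k with hadef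
    have ha0 : a 0 = 0 := rfl
    have haS : ∀ k, a (k + 1) = max (a k) (Hm (a k)) + 1 := fun _ => rfl
    have hamono : StrictMono a := by
      apply strictMono_nat_of_lt_succ
      intro k
      rw [haS]
      have := le_max_left (a k) (Hm (a k))
      omega
    -- idx injective on some V
    have hVinj : ∃ V ∈ u, Set.InjOn (idx a) V := by
      rcases hsel (idx a) with ⟨V, hV, k, hconst⟩ | h
      · exfalso
        have hsub : V ⊆ Set.Iio (a (k + 1)) := by
          intro n hn
          have := lt_idx_succ hamono n
          rw [hconst n hn] at this
          exact this
        exact finite_notMem hnp (Set.Finite.subset (Set.finite_Iio _) hsub) hV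
      · exact h
    obtain ⟨V, hV, hVi⟩ := hVinj
    obtain ⟨b, hb⟩ := exists_parity u (idx a)
    refine ⟨U ∩ V ∩ {n | idx a n % 2 = b},
      Filter.inter_mem (Filter.inter_mem hU hV) hb, ?_⟩
    rintro m ⟨⟨hmU, hmV⟩, hmb⟩ n ⟨⟨hnU, hnV⟩, hnb⟩ hmn
    set j := idx a m with hj
    set k := idx a n with hk
    have hjk : j ≤ k := idx_mono hamono ha0 (le_of_lt hmn)
    have hne : j ≠ k := fun hjke => absurd (hVi hmV hnV hjke) (Nat.ne_of_lt hmn)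
    have hpar : j % 2 = b := hmb
    have hpar2 : k % 2 = b := hnb
    have hjk2 : j + 2 ≤ k := by omega
    have h1 : a (j + 2) ≤ a k := hamono.monotone hjk2
    have h2 : a k ≤ n := idx_le ha0 n
    have h3 : hfun m ≤ Hm (a (j + 1)) :=
      hHmle m (a (j + 1)) (le_of_lt (lt_idx_succ hamono m))
    have h4 : Hm (a (j + 1)) < a (j + 2) := by
      rw [haS]
      exact Nat.lt_succ_of_le (le_max_right _ _)
    have h5 : m < f n := hfkey m n hnU (lt_of_le_of_lt h3 (lt_of_lt_of_le h4 (le_trans h1 h2)))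
    exact hB'sub m (hkey m n h5)

lemma pure_of_singleton {u : Ultrafilter ℕ} {k : ℕ} (h : {k} ∈ u) : u = pure k := by
  rcases Ultrafilter.eq_pure_of_finite_mem (Set.finite_singleton k) h with ⟨a, ha, hu⟩
  rwa [Set.mem_singleton_iff.mp ha] at hu

-- Ramsey → Selective
lemma ramsey_to_selective {u : Ultrafilter ℕ} (hr : IsRamsey u) : IsSelective u := by
  intro f
  obtain ⟨H, hH, b, hhom⟩ := hr (fun m n => decide (f m = f n))
  cases b with
  | true =>
    left
    obtain ⟨m0, hm0⟩ := Ultrafilter.nonempty_of_mem hH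
    refine ⟨H, hH, f m0, fun n hn => ?_⟩
    rcases lt_trichotomy n m0 with h | h | h
    · exact of_decide_eq_true (hhom n hn m0 hm0 h)
    · rw [h]
    · exact (of_decide_eq_true (hhom m0 hm0 n hn h)).symm
  | false =>
    right
    refine ⟨H, hH, fun m hm n hn hfe => ?_⟩
    by_contra hne
    rcases lt_trichotomy m n with h | h | h
    · exact of_decide_eq_false (hhom m hm n hn h) hfe
    · exact hne h
    · exact of_decide_eq_false (hhom n hn m hm h) hfe.symm

-- Selective → Ramsey
lemma selective_to_ramsey {u : Ultrafilter ℕ} (hnp : ∀ n : ℕ, u ≠ pure n)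
    (hsel : IsSelective u) : IsRamsey u := by
  intro c
  have hchoice : ∀ n, ∃ b : Bool, {m | c n m = b} ∈ u := by
    intro n
    rcases Ultrafilter.mem_or_compl_mem u {m | c n m = true} with h | h
    · exact ⟨true, h⟩
    · refine ⟨false, ?_⟩
      have : {m | c n m = true}ᶜ = {m | c n m = false} := by
        ext m; simp [Set.mem_compl_iff]
      rwa [this] at h
  choose bn hbn using hchoice
  have hbchoice : ∃ b : Bool, {n | bn n = b} ∈ u := by
    rcases Ultrafilter.mem_or_compl_mem u {n | bn n = true} with h | h
    · exact ⟨true, h⟩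
    · refine ⟨false, ?_⟩
      have : {n | bn n = true}ᶜ = {n | bn n = false} := by
        ext n; simp [Set.mem_compl_iff]
      rwa [this] at h
  obtain ⟨b, hZ⟩ := hbchoice
  set B : ℕ → Set ℕ := fun n => if bn n = b then {m | c n m = b} else Set.univ with hBdef
  have hBmem : ∀ n, B n ∈ u := by
    intro n
    by_cases h : bn n = b
    · simp only [hBdef, if_pos h]
      rw [← h]
      exact hbn n
    · simp only [hBdef, if_neg h]
      exact Filter.univ_mem
  obtain ⟨H, hH, hdiag⟩ := diagonal hnp hsel B hBmem
  refine ⟨H ∩ {n | bn n = b}, Filter.inter_mem hH hZ, b, ?_⟩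
  rintro m ⟨hmH, hmb⟩ n ⟨hnH, _⟩ hmn
  have h1 : n ∈ B m := hdiag m hmH n hnH hmn
  have hmb' : bn m = b := hmb
  have h1' : n ∈ (if bn m = b then {m' | c m m' = b} else Set.univ) := h1
  rw [if_pos hmb'] at h1'
  exact h1'

-- Selective → RK-minimal
lemma selective_to_min {u : Ultrafilter ℕ} (hsel : IsSelective u) :
    ∀ v : Ultrafilter ℕ, (∀ n : ℕ, v ≠ pure n) → RKle v u → RKequiv v u := by
  intro v hvnp ⟨f, hf⟩
  refine ⟨⟨f, hf⟩, ?_⟩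
  rcases hsel f with ⟨U, hU, k, hconst⟩ | ⟨U, hU, hinj⟩
  · exfalso
    apply hvnp k
    apply pure_of_singleton
    rw [← hf, Ultrafilter.mem_map]
    exact Filter.mem_of_superset hU fun n hn => hconst n hn
  · set g : ℕ → ℕ := fun m => if hm : ∃ n ∈ U, f n = m then hm.choose else 0 with hgdef
    have hginv : ∀ n ∈ U, g (f n) = n := by
      intro n hn
      have hex : ∃ n' ∈ U, f n' = f n := ⟨n, hn, rfl⟩
      have : g (f n) = hex.choose := by
        simp only [hgdef]
        rw [dif_pos hex]
      rw [this]
      obtain ⟨hU', hfeq⟩ := hex.choose_spec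
      exact hinj hU' hn hfeq
    refine ⟨g, ?_⟩
    rw [← hf, umap_map]
    have : Ultrafilter.map (g ∘ f) u = Ultrafilter.map id u := by
      apply map_congr'
      exact Filter.mem_of_superset hU fun n hn => hginv n hn
    rw [this, umap_id]

-- RK-minimal → Selective
lemma min_to_selective {u : Ultrafilter ℕ}
    (hmin : ∀ v : Ultrafilter ℕ, (∀ n : ℕ, v ≠ pure n) → RKle v u → RKequiv v u) :
    IsSelective u := by
  intro f
  by_cases hcon : ∃ U ∈ u, ∃ k, ∀ n ∈ U, f n = k
  · exact Or.inl hcon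
  · right
    push_neg at hcon
    set v := Ultrafilter.map f u with hvdef
    have hvnp : ∀ n : ℕ, v ≠ pure n := by
      intro k hk
      have : {k} ∈ v := by rw [hk]; exact Filter.mem_pure.mpr rfl
      rw [hvdef, Ultrafilter.mem_map] at this
      obtain ⟨n, hn, hne⟩ := hcon (f ⁻¹' {k}) this k
      exact hne hn
    obtain ⟨_, g, hg⟩ := hmin v hvnp ⟨f, rfl⟩
    rw [hvdef, umap_map] at hg
    have hfix : {n | g (f n) = n} ∈ u := fixpoint hg
    refine ⟨_, hfix, fun m hm n hn hfe => ?_⟩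
    calc m = g (f m) := hm.symm
    _ = g (f n) := by rw [hfe]
    _ = n := hn

end Aux

/-- A nonprincipal ultrafilter on `ω` is Ramsey iff it is selective,
and this holds iff it is Rudin–Keisler minimal. -/
theorem ramsey_iff_selective_iff_rkMinimal (𝔲 : Ultrafilter ℕ)
    (hnp : ∀ n : ℕ, 𝔲 ≠ pure n) :
    (IsRamsey 𝔲 ↔ IsSelective 𝔲) ∧
    (IsSelective 𝔲 ↔
      ∀ 𝔳 : Ultrafilter ℕ, (∀ n : ℕ, 𝔳 ≠ pure n) → RKle 𝔳 𝔲 → RKequiv 𝔳 𝔲) := by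
  exact ⟨⟨ramsey_to_selective, selective_to_ramsey hnp⟩,
    ⟨selective_to_min, min_to_selective⟩⟩
end
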